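/- Let α < β be reals and let g : [α,β] → ℝ be continuous. Suppose the zero set of g in [α,β] is exactly the finite set {x₁, …, x_n} (possibly empty), and that g is differentiable at each xᵢ with g'(xᵢ) ≠ 0. Let K > 0. Then there exist constants C > 0 and δ₀ > 0 such that for every δ ∈ (0, δ₀] and every function f : [α,β] → ℝ with sup_{x∈[α,β]} |f(x) − g(x)| ≤ K·√δ, the set {x ∈ [α,β] : (f(x) > 0 and g(x) < 0) or (f(x) < 0 and g(x) > 0)} is contained in the union over i = 1,…,n of the intervals [xᵢ − C√δ, xᵢ + C√δ]. -/
import Mathlib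


/-- Remark 2.7: if `g` is continuous on `[α,β]` with finitely many zeros
`x₁,…,xₙ`, at each of which `g` is differentiable with nonvanishing derivative,
then there are `C > 0` and `δ₀ > 0` such that for all `δ ∈ (0,δ₀]` and any `f`
with `sup_{[α,β]} |f − g| ≤ K√δ`, the set where `f` and `g` take strictly
opposite signs is contained in `⋃ᵢ [xᵢ − C√δ, xᵢ + C√δ]`. -/
theorem sign_mismatch_near_zeros
    (α β : ℝ) (hαβ : α < β) (g : ℝ → ℝ) (hg : ContinuousOn g (Set.Icc α β))
    (n : ℕ) (xs : Fin n → ℝ) (hxs : ∀ i, xs i ∈ Set.Icc α β)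
    (hinj : Function.Injective xs)
    (hzero : ∀ y ∈ Set.Icc α β, (g y = 0 ↔ ∃ i, y = xs i))
    (g' : Fin n → ℝ)
    (hderiv : ∀ i, HasDerivWithinAt g (g' i) (Set.Icc α β) (xs i))
    (hg' : ∀ i, g' i ≠ 0)
    (K : ℝ) (hK : 0 < K) :
    ∃ C > 0, ∃ δ₀ > 0, ∀ δ ∈ Set.Ioc (0:ℝ) δ₀, ∀ f : ℝ → ℝ,
      (∀ y ∈ Set.Icc α β, |f y - g y| ≤ K * Real.sqrt δ) →
      ∀ y ∈ Set.Icc α β,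
        ((0 < f y ∧ g y < 0) ∨ (f y < 0 ∧ 0 < g y)) →
        ∃ i, y ∈ Set.Icc (xs i - C * Real.sqrt δ) (xs i + C * Real.sqrt δ) := by
  -- radii from differentiability: near each zero, |g y| ≥ (|g' i|/2)|y - xs i|
  have hr : ∀ i : Fin n, ∃ r > 0, ∀ y ∈ Set.Icc α β, |y - xs i| < r →
      |g' i| / 2 * |y - xs i| ≤ |g y| := by
    intro i
    have h0 : g (xs i) = 0 := (hzero _ (hxs i)).2 ⟨i, rfl⟩
    have hlo := (hasDerivWithinAt_iff_isLittleO.1 (hderiv i)).def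
      (c := |g' i| / 2) (div_pos (abs_pos.2 (hg' i)) two_pos)
    rw [eventually_nhdsWithin_iff, Metric.eventually_nhds_iff] at hlo
    obtain ⟨ε, hε, hεP⟩ := hlo
    refine ⟨ε, hε, fun y hy hyε => ?_⟩
    have hd : dist y (xs i) < ε := by rwa [Real.dist_eq]
    have := hεP hd hy
    simp only [h0, sub_zero, smul_eq_mul, Real.norm_eq_abs] at this
    have h1 : |(y - xs i) * g' i| ≤ |g y| + |g y - (y - xs i) * g' i| := by
      have := abs_sub_abs_le_abs_sub ((y - xs i) * g' i) (g y)
      have h2 : |(y - xs i) * g' i - g y| = |g y - (y - xs i) * g' i| := abs_sub_comm _ _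
      linarith
    have h3 : |(y - xs i) * g' i| = |g' i| * |y - xs i| := by
      rw [abs_mul]; ring
    linarith
  choose r hr0 hrs using hr
  set S := Set.Icc α β \ ⋃ i, Metric.ball (xs i) (r i) with hS
  have hScpt : IsCompact S := isCompact_Icc.diff (isOpen_iUnion fun i => Metric.isOpen_ball)
  obtain ⟨m, hm0, hmS⟩ : ∃ m > 0, ∀ y ∈ S, m ≤ |g y| := by
    rcases S.eq_empty_or_nonempty with hE | hne
    · exact ⟨1, one_pos, by simp [hE]⟩
    · obtain ⟨y₀, hy₀S, hy₀min⟩ :=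
        hScpt.exists_isMinOn hne ((hg.mono Set.diff_subset).abs)
      replace hy₀min : ∀ y ∈ S, |g y₀| ≤ |g y| := fun y hy => hy₀min hy
      refine ⟨|g y₀|, abs_pos.2 fun h0 => ?_, hy₀min⟩
      obtain ⟨i, rfl⟩ := (hzero _ hy₀S.1).1 h0
      exact hy₀S.2 (Set.mem_iUnion.2 ⟨i, by simpa using hr0 i⟩)
  refine ⟨1 + ∑ i, 2 * K / |g' i|, by positivity, (m / (2 * K)) ^ 2, by positivity,
    fun δ hδ f hf y hy hsign => ?_⟩
  have hsq : Real.sqrt δ ≤ m / (2 * K) := by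
    calc Real.sqrt δ ≤ Real.sqrt ((m / (2 * K)) ^ 2) := Real.sqrt_le_sqrt hδ.2
    _ = m / (2 * K) := by rw [Real.sqrt_sq (by positivity)]
  have hgb : |g y| ≤ K * Real.sqrt δ := by
    have hfg := hf y hy
    rcases hsign with ⟨h1, h2⟩ | ⟨h1, h2⟩
    · have := le_abs_self (f y - g y)
      rw [abs_of_neg h2]; linarith
    · have := neg_abs_le (f y - g y)
      rw [abs_of_pos h2]; linarith
  have hgm : |g y| < m := by
    have : K * Real.sqrt δ ≤ m / 2 := by
      calc K * Real.sqrt δ ≤ K * (m / (2 * K)) := by nlinarith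
      _ = m / 2 := by field_simp
    linarith
  have hyS : y ∉ S := fun hyS => absurd (hmS y hyS) (by linarith)
  have hyU : y ∈ ⋃ i, Metric.ball (xs i) (r i) := by
    by_contra h
    exact hyS ⟨hy, h⟩
  obtain ⟨i, hi⟩ := Set.mem_iUnion.1 hyU
  have hid : |y - xs i| < r i := by rwa [Metric.mem_ball, Real.dist_eq] at hi
  have hkey := hrs i y hy hid
  have hgi : 0 < |g' i| := abs_pos.2 (hg' i)
  have hsd : 0 ≤ Real.sqrt δ := Real.sqrt_nonneg δ
  have hbd : |y - xs i| ≤ (2 * K / |g' i|) * Real.sqrt δ := by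
    rw [div_mul_eq_mul_div, le_div_iff₀ hgi]
    nlinarith
  refine ⟨i, ?_⟩
  have hC : 2 * K / |g' i| ≤ 1 + ∑ j, 2 * K / |g' j| := by
    have h1 : 2 * K / |g' i| ≤ ∑ j, 2 * K / |g' j| :=
      Finset.single_le_sum (f := fun j => 2 * K / |g' j|)
        (fun j _ => by positivity) (Finset.mem_univ i)
    linarith
  have habs : |y - xs i| ≤ (1 + ∑ j, 2 * K / |g' j|) * Real.sqrt δ := by
    calc |y - xs i| ≤ (2 * K / |g' i|) * Real.sqrt δ := hbd
    _ ≤ (1 + ∑ j, 2 * K / |g' j|) * Real.sqrt δ := by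
        exact mul_le_mul_of_nonneg_right hC hsd
  rw [abs_sub_le_iff] at habs
  constructor <;> [linarith [habs.2]; linarith [habs.1]]
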